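/- Let s > 1 be real and fix a point w in the complex upper half-plane. Define u(x, y) := Q_{s−1}(1 + ((x − Re w)² + (y − Im w)²)/(2·y·Im w)) for all (x, y) ∈ ℝ × (0, ∞) with (x, y) ≠ (Re w, Im w). Then u satisfies the partial differential equation y²·(∂²u/∂x² + ∂²u/∂y²) = s·(s−1)·u(x, y) on this domain; equivalently, the function g_s(z, w) := −2·Q_{s−1}(1 + |z − w|²/(2·Im z·Im w)) is an eigenfunction of the hyperbolic Laplacian Δ = −y²(∂²/∂x² + ∂²/∂y²) on ℍ∖{w} with eigenvalue s(1 − s). -/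

import Mathlib

open MeasureTheory

/-- The Legendre function of the second kind `Q_{s−1}(t)`, defined for `s > 1`, `t > 1` by
`Q_{s−1}(t) := ∫₀^∞ (t + √(t²−1)·cosh v)^(−s) dv`. -/
noncomputable def legendreQ (s t : ℝ) : ℝ :=
  ∫ v in Set.Ioi (0 : ℝ), (t + Real.sqrt (t ^ 2 - 1) * Real.cosh v) ^ (-s)

/-- The function `u(x, y) := Q_{s−1}(1 + ((x − Re w)² + (y − Im w)²)/(2·y·Im w))`;
for `z = x + iy` in the upper half-plane, the argument equals `cosh` of the hyperbolic
distance from `z` to `w`, so `−2·u` is the Green's function kernel `g_s(z, w)`. -/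
noncomputable def greenKernel (s : ℝ) (w : ℂ) (x y : ℝ) : ℝ :=
  legendreQ s (1 + ((x - w.re) ^ 2 + (y - w.im) ^ 2) / (2 * y * w.im))

/-!
Differentiating twice under the integral sign shows that `Q = legendreQ s` solves Legendre's
equation `(t² - 1) Q'' + 2t Q' = s(s - 1) Q` on `(1, ∞)`: the Legendre operator maps the integrand
`(t + √(t² - 1) cosh v)^(-s)` to `(t² - 1)⁻¹ ∂ᵥ²` of it, whose integral over `(0, ∞)` vanishes.
For `T = cosh d(x + iy, w)` one has `y² |∇T|² = T² - 1` and `y² ΔT = 2T`, so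
`y² Δ f(T) = (T² - 1) f''(T) + 2T f'(T)` for every `f`, which turns Legendre's equation into the
eigenfunction equation.
-/

open Real Set Filter Topology

namespace LegendreQ

noncomputable def base (t v : ℝ) : ℝ := t + √(t ^ 2 - 1) * cosh v

noncomputable def integrand (s t v : ℝ) : ℝ := base t v ^ (-s)

noncomputable def baseLogDeriv (t v : ℝ) : ℝ := (1 + t * cosh v / √(t ^ 2 - 1)) / base t v

noncomputable def integrandDeriv (s t v : ℝ) : ℝ := -s * baseLogDeriv t v * integrand s t v

noncomputable def integrandDeriv2 (s t v : ℝ) : ℝ :=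
  s * ((s + 1) * baseLogDeriv t v ^ 2 + cosh v / (√(t ^ 2 - 1) ^ 3 * base t v)) *
    integrand s t v

/-- `(t² - 1)⁻¹ ∂ᵥ integrand s t v` -/
noncomputable def flux (s t v : ℝ) : ℝ :=
  -(s / √(t ^ 2 - 1)) * (sinh v / base t v) * integrand s t v

variable {s t : ℝ}

lemma sqrt_sq_sub_one_pos (ht : 1 < t) : 0 < √(t ^ 2 - 1) := by
  apply sqrt_pos.2; nlinarith

lemma sq_sqrt_sq_sub_one (ht : 1 < t) : √(t ^ 2 - 1) ^ 2 = t ^ 2 - 1 :=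
  sq_sqrt (by nlinarith)

lemma sqrt_mul_cosh_le_base (ht : 0 ≤ t) (v : ℝ) : √(t ^ 2 - 1) * cosh v ≤ base t v := by
  unfold base; linarith

lemma base_pos (ht : 1 < t) (v : ℝ) : 0 < base t v := by
  have := sqrt_sq_sub_one_pos ht
  unfold base; positivity

lemma hasDerivAt_sqrt_sq_sub_one (ht : 1 < t) :
    HasDerivAt (fun t ↦ √(t ^ 2 - 1)) (t / √(t ^ 2 - 1)) t := by
  have hc := (sqrt_sq_sub_one_pos ht).ne'
  refine (((hasDerivAt_pow 2 t).sub_const 1).sqrt (by nlinarith)).congr_deriv ?_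
  field_simp
  norm_num

lemma hasDerivAt_base (ht : 1 < t) (v : ℝ) :
    HasDerivAt (base · v) (1 + t * cosh v / √(t ^ 2 - 1)) t := by
  refine ((hasDerivAt_id t).add ((hasDerivAt_sqrt_sq_sub_one ht).mul_const (cosh v))).congr_deriv ?_
  ring

lemma hasDerivAt_baseLogDeriv (ht : 1 < t) (v : ℝ) :
    HasDerivAt (baseLogDeriv · v)
      (-(cosh v / (√(t ^ 2 - 1) ^ 3 * base t v)) - baseLogDeriv t v ^ 2) t := by
  have hc := sqrt_sq_sub_one_pos ht
  have hc2 := sq_sqrt_sq_sub_one ht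
  have hb := base_pos ht v
  have hnum : HasDerivAt (fun t ↦ 1 + t * cosh v / √(t ^ 2 - 1))
      (-(cosh v / √(t ^ 2 - 1) ^ 3)) t := by
    refine ((((hasDerivAt_id t).mul_const (cosh v)).div (hasDerivAt_sqrt_sq_sub_one ht)
      hc.ne').const_add 1).congr_deriv ?_
    simp only [id]
    set c := √(t ^ 2 - 1)
    field_simp
    linear_combination hc2
  refine (hnum.div (hasDerivAt_base ht v) hb.ne').congr_deriv ?_
  unfold baseLogDeriv
  field_simp

lemma hasDerivAt_integrand (ht : 1 < t) (v : ℝ) :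
    HasDerivAt (integrand s · v) (integrandDeriv s t v) t := by
  refine ((hasDerivAt_base ht v).rpow_const (p := -s) (Or.inl (base_pos ht v).ne')).congr_deriv ?_
  rw [rpow_sub_one (base_pos ht v).ne', integrandDeriv, baseLogDeriv, integrand]
  ring

lemma hasDerivAt_integrandDeriv (ht : 1 < t) (v : ℝ) :
    HasDerivAt (integrandDeriv s · v) (integrandDeriv2 s t v) t := by
  have := ((hasDerivAt_baseLogDeriv ht v).mul (hasDerivAt_integrand (s := s) ht v)).const_mul (-s)
  refine (this.congr_deriv ?_).congr_of_eventuallyEq (.of_forall fun t ↦ ?_)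
  · simp only [integrandDeriv2, integrandDeriv]; ring
  · simp only [integrandDeriv, Pi.mul_apply]; ring

lemma integrand_pos (ht : 1 < t) (v : ℝ) : 0 < integrand s t v :=
  rpow_pos_of_pos (base_pos ht v) _

lemma baseLogDeriv_nonneg (ht : 1 < t) (v : ℝ) : 0 ≤ baseLogDeriv t v := by
  have := sqrt_sq_sub_one_pos ht
  have := base_pos ht v
  have := cosh_pos v
  unfold baseLogDeriv; positivity

lemma baseLogDeriv_le (ht : 1 < t) (v : ℝ) : baseLogDeriv t v ≤ t / (t ^ 2 - 1) := by
  have hc := sqrt_sq_sub_one_pos ht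
  have hc2 := sq_sqrt_sq_sub_one ht
  rw [baseLogDeriv, div_le_div_iff₀ (base_pos ht v) (by nlinarith), base]
  set c := √(t ^ 2 - 1)
  rw [← hc2]
  field_simp
  nlinarith [cosh_pos v]

lemma cosh_div_le (ht : 1 < t) (v : ℝ) :
    cosh v / (√(t ^ 2 - 1) ^ 3 * base t v) ≤ 1 / (t ^ 2 - 1) ^ 2 := by
  have hc := sqrt_sq_sub_one_pos ht
  have hc2 := sq_sqrt_sq_sub_one ht
  have hcb := sqrt_mul_cosh_le_base (t := t) (by linarith) v
  have : 0 < t ^ 2 - 1 := by nlinarith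
  rw [div_le_div_iff₀ (by have := base_pos ht v; positivity) (by positivity)]
  calc cosh v * (t ^ 2 - 1) ^ 2 = √(t ^ 2 - 1) ^ 3 * (√(t ^ 2 - 1) * cosh v) := by
        linear_combination (-cosh v * (t ^ 2 - 1 + √(t ^ 2 - 1) ^ 2)) * hc2
    _ ≤ 1 * (√(t ^ 2 - 1) ^ 3 * base t v) := by rw [one_mul]; gcongr

lemma abs_integrandDeriv_le (hs : 0 ≤ s) (ht : 1 < t) (v : ℝ) :
    |integrandDeriv s t v| ≤ s * (t / (t ^ 2 - 1)) * integrand s t v := by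
  have := baseLogDeriv_nonneg ht v
  have := integrand_pos (s := s) ht v
  rw [integrandDeriv, neg_mul, neg_mul, abs_neg, abs_of_nonneg (by positivity)]
  gcongr
  exact baseLogDeriv_le ht v

lemma abs_integrandDeriv2_le (hs : 0 ≤ s) (ht : 1 < t) (v : ℝ) :
    |integrandDeriv2 s t v|
      ≤ s * ((s + 1) * (t / (t ^ 2 - 1)) ^ 2 + 1 / (t ^ 2 - 1) ^ 2) * integrand s t v := by
  have := baseLogDeriv_nonneg ht v
  have := integrand_pos (s := s) ht v
  have := sqrt_sq_sub_one_pos ht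
  have := base_pos ht v
  have := cosh_pos v
  rw [integrandDeriv2, abs_of_nonneg (by positivity)]
  gcongr s * ((s + 1) * ?_ ^ 2 + ?_) * _
  · exact baseLogDeriv_le ht v
  · exact cosh_div_le ht v

lemma integrand_le_of_le {t₁ : ℝ} (hs : 0 ≤ s) (ht₁ : 1 < t₁) (ht : t₁ ≤ t) (v : ℝ) :
    integrand s t v ≤ integrand s t₁ v := by
  refine rpow_le_rpow_of_nonpos (base_pos ht₁ v) ?_ (by linarith)
  unfold base
  gcongr

lemma integrand_le_exp (hs : 0 ≤ s) (ht : 1 < t) (v : ℝ) :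
    integrand s t v ≤ (√(t ^ 2 - 1) / 2) ^ (-s) * exp (-s * v) := by
  have hc := sqrt_sq_sub_one_pos ht
  have hcosh : exp v / 2 ≤ cosh v := by
    rw [cosh_eq]; linarith [exp_pos (-v)]
  calc integrand s t v ≤ (√(t ^ 2 - 1) / 2 * exp v) ^ (-s) := by
        refine rpow_le_rpow_of_nonpos (by positivity) ?_ (by linarith)
        calc √(t ^ 2 - 1) / 2 * exp v = √(t ^ 2 - 1) * (exp v / 2) := by ring
          _ ≤ √(t ^ 2 - 1) * cosh v := by gcongr
          _ ≤ base t v := sqrt_mul_cosh_le_base (by linarith) v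
    _ = (√(t ^ 2 - 1) / 2) ^ (-s) * exp (-s * v) := by
        rw [mul_rpow (by positivity) (exp_pos v).le, ← exp_mul, mul_comm v]

lemma continuous_base (t : ℝ) : Continuous (base t) := by
  unfold base; fun_prop

lemma continuous_integrand (ht : 1 < t) : Continuous (integrand s t) :=
  (continuous_base t).rpow_const fun v ↦ .inl (base_pos ht v).ne'

lemma continuous_baseLogDeriv (ht : 1 < t) : Continuous (baseLogDeriv t) :=
  (by fun_prop : Continuous fun v ↦ 1 + t * cosh v / √(t ^ 2 - 1)).div (continuous_base t)
    fun v ↦ (base_pos ht v).ne'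

lemma continuous_integrandDeriv (ht : 1 < t) : Continuous (integrandDeriv s t) :=
  (continuous_const.mul (continuous_baseLogDeriv ht)).mul (continuous_integrand ht)

lemma continuous_integrandDeriv2 (ht : 1 < t) : Continuous (integrandDeriv2 s t) := by
  have hcb : Continuous fun v ↦ cosh v / (√(t ^ 2 - 1) ^ 3 * base t v) :=
    continuous_cosh.div (continuous_const.mul (continuous_base t))
      fun v ↦ (mul_pos (pow_pos (sqrt_sq_sub_one_pos ht) 3) (base_pos ht v)).ne'
  exact (continuous_const.mul ((continuous_const.mul
    ((continuous_baseLogDeriv ht).pow 2)).add hcb)).mul (continuous_integrand ht)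

lemma integrableOn_integrand (hs : 0 < s) (ht : 1 < t) : IntegrableOn (integrand s t) (Ioi 0) :=
  ((exp_neg_integrableOn_Ioi 0 hs).const_mul _).mono' (continuous_integrand ht).aestronglyMeasurable
    (.of_forall fun v ↦ by
      rw [norm_of_nonneg (integrand_pos ht v).le]; exact integrand_le_exp hs.le ht v)

lemma tendsto_integrand_atTop (hs : 0 < s) (ht : 1 < t) :
    Tendsto (integrand s t) atTop (𝓝 0) := by
  have hexp : Tendsto (fun v ↦ (√(t ^ 2 - 1) / 2) ^ (-s) * exp (-s * v)) atTop (𝓝 0) := by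
    simpa using (tendsto_exp_atBot.comp
      (tendsto_id.const_mul_atTop_of_neg (neg_lt_zero.2 hs))).const_mul ((√(t ^ 2 - 1) / 2) ^ (-s))
  exact squeeze_zero (fun v ↦ (integrand_pos ht v).le) (integrand_le_exp hs.le ht) hexp

lemma integrableOn_of_abs_le_mul_integrand {f : ℝ → ℝ} {C : ℝ} (hs : 0 < s) (ht : 1 < t)
    (hf : Continuous f) (hbound : ∀ v, |f v| ≤ C * integrand s t v) :
    IntegrableOn f (Ioi 0) :=
  ((integrableOn_integrand hs ht).const_mul C).mono' hf.aestronglyMeasurable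
    (.of_forall hbound)

/-- On `[t₁, t + 1]` with `1 < t₁ < t`, `C` is bounded and the integrand is largest at `t₁`: this
gives the dominating function. -/
lemma hasDerivAt_integral_of_abs_le {F F' : ℝ → ℝ → ℝ} {C : ℝ → ℝ} (hs : 0 < s) (ht : 1 < t)
    (hF : ∀ t' > 1, Continuous (F t')) (hF_int : IntegrableOn (F t) (Ioi 0))
    (hF' : ∀ t' > 1, ∀ v, HasDerivAt (F · v) (F' t' v) t') (hF'_cont : Continuous (F' t))
    (hC : ContinuousOn C (Ioi 1)) (hbound : ∀ t' > 1, ∀ v, |F' t' v| ≤ C t' * integrand s t' v) :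
    HasDerivAt (fun t ↦ ∫ v in Ioi 0, F t v) (∫ v in Ioi 0, F' t v) t := by
  obtain ⟨t₁, ht₁, ht₁t⟩ := exists_between ht
  have hIcc : Icc t₁ (t + 1) ⊆ Ioi 1 := fun t' ht' ↦ lt_of_lt_of_le ht₁ ht'.1
  obtain ⟨K, hK⟩ := isCompact_Icc.exists_bound_of_continuousOn (hC.mono hIcc)
  refine (hasDerivAt_integral_of_dominated_loc_of_deriv_le (bound := fun v ↦ K * integrand s t₁ v)
    (Icc_mem_nhds ht₁t (lt_add_one t)) ?_ hF_int hF'_cont.aestronglyMeasurable ?_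
    ((integrableOn_integrand hs ht₁).const_mul K) ?_).2
  · filter_upwards [Ioi_mem_nhds ht] with t' ht' using (hF t' ht').aestronglyMeasurable
  · refine .of_forall fun v t' ht' ↦ ?_
    have hC' := hK t' ht'
    calc ‖F' t' v‖ ≤ C t' * integrand s t' v := hbound t' (hIcc ht') v
      _ ≤ K * integrand s t₁ v :=
        mul_le_mul ((le_abs_self _).trans hC') (integrand_le_of_le hs.le ht₁ ht'.1 v)
          (integrand_pos (hIcc ht') v).le ((norm_nonneg _).trans hC')
  · exact .of_forall fun v t' ht' ↦ hF' t' (hIcc ht') v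

lemma continuousOn_div_sq_sub_one :
    ContinuousOn (fun t : ℝ ↦ t / (t ^ 2 - 1)) (Ioi 1) :=
  continuousOn_id.div (by fun_prop) fun t (ht : 1 < t) ↦ by nlinarith

lemma continuousOn_one_div_sq_sub_one_sq :
    ContinuousOn (fun t : ℝ ↦ 1 / (t ^ 2 - 1) ^ 2) (Ioi 1) :=
  continuousOn_const.div (by fun_prop) fun t (ht : 1 < t) ↦ by
    have : 0 < t ^ 2 - 1 := by nlinarith
    positivity

lemma integrableOn_integrandDeriv (hs : 0 < s) (ht : 1 < t) :
    IntegrableOn (integrandDeriv s t) (Ioi 0) :=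
  integrableOn_of_abs_le_mul_integrand hs ht (continuous_integrandDeriv ht)
    (abs_integrandDeriv_le hs.le ht)

lemma integrableOn_integrandDeriv2 (hs : 0 < s) (ht : 1 < t) :
    IntegrableOn (integrandDeriv2 s t) (Ioi 0) :=
  integrableOn_of_abs_le_mul_integrand hs ht (continuous_integrandDeriv2 ht)
    (abs_integrandDeriv2_le hs.le ht)

lemma sq_sub_one_mul_baseLogDeriv_sq (ht : 1 < t) (v : ℝ) :
    (t ^ 2 - 1) * baseLogDeriv t v ^ 2 = (sinh v / base t v) ^ 2 + 1 := by
  have hc := (sqrt_sq_sub_one_pos ht).ne'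
  have hc2 := sq_sqrt_sq_sub_one ht
  have hb := (base_pos ht v).ne'
  have hB : base t v = t + √(t ^ 2 - 1) * cosh v := rfl
  rw [baseLogDeriv]
  generalize base t v = B at *
  generalize √(t ^ 2 - 1) = c at *
  field_simp
  linear_combination -c ^ 2 * (B + t + c * cosh v) * hB
    + (c ^ 2 * (1 - cosh v ^ 2) - (c + t * cosh v) ^ 2) * hc2 - c ^ 2 * sinh_sq v

lemma mul_baseLogDeriv (ht : 1 < t) (v : ℝ) :
    t * baseLogDeriv t v = 1 + cosh v / (√(t ^ 2 - 1) * base t v) := by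
  have hc := (sqrt_sq_sub_one_pos ht).ne'
  have hc2 := sq_sqrt_sq_sub_one ht
  have hb := (base_pos ht v).ne'
  have hB : base t v = t + √(t ^ 2 - 1) * cosh v := rfl
  rw [baseLogDeriv]
  generalize base t v = B at *
  generalize √(t ^ 2 - 1) = c at *
  field_simp
  linear_combination -c * hB - cosh v * hc2

lemma hasDerivAt_integrand_right (ht : 1 < t) (v : ℝ) :
    HasDerivAt (integrand s t)
      (-s * (√(t ^ 2 - 1) * sinh v / base t v) * integrand s t v) v := by
  have hbase : HasDerivAt (base t) (√(t ^ 2 - 1) * sinh v) v :=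
    ((hasDerivAt_cosh v).const_mul _).const_add t
  refine (hbase.rpow_const (p := -s) (.inl (base_pos ht v).ne')).congr_deriv ?_
  rw [rpow_sub_one (base_pos ht v).ne', integrand]
  ring

lemma hasDerivAt_flux (ht : 1 < t) (v : ℝ) :
    HasDerivAt (flux s t) ((t ^ 2 - 1) * integrandDeriv2 s t v + 2 * t * integrandDeriv s t v
      - s * (s - 1) * integrand s t v) v := by
  have hc := (sqrt_sq_sub_one_pos ht).ne'
  have hb := base_pos ht v
  have hσ : HasDerivAt (fun v ↦ sinh v / base t v)
      (cosh v / base t v - √(t ^ 2 - 1) * (sinh v / base t v) ^ 2) v := by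
    refine ((hasDerivAt_sinh v).div (((hasDerivAt_cosh v).const_mul _).const_add t)
      hb.ne').congr_deriv ?_
    rw [base] at hb ⊢
    field_simp
  refine ((hσ.const_mul _).mul (hasDerivAt_integrand_right ht v)).congr_deriv ?_
  have hk : (t ^ 2 - 1) * (cosh v / (√(t ^ 2 - 1) ^ 3 * base t v))
      = cosh v / (√(t ^ 2 - 1) * base t v) := by
    have hc2 := sq_sqrt_sq_sub_one ht
    generalize √(t ^ 2 - 1) = c at *
    rw [← hc2]; field_simp
  -- both sides equal `s * integrand s t v * ((s + 1) * σ ^ 2 - cosh v / (√(t ^ 2 - 1) * base t v))`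
  -- where `σ = sinh v / base t v`
  rw [integrandDeriv2, integrandDeriv]
  linear_combination (-(s * integrand s t v) * (s + 1)) * sq_sub_one_mul_baseLogDeriv_sq ht v
    - s * integrand s t v * hk + 2 * s * integrand s t v * mul_baseLogDeriv ht v
    + s * (s + 1) * (sinh v / base t v) ^ 2 * integrand s t v * mul_inv_cancel₀ hc

lemma abs_flux_le (hs : 0 ≤ s) (ht : 1 < t) (v : ℝ) :
    |flux s t v| ≤ s / (t ^ 2 - 1) * integrand s t v := by
  have hc := sqrt_sq_sub_one_pos ht
  have hb := base_pos ht v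
  have hP := integrand_pos (s := s) ht v
  have hσ : |sinh v / base t v| ≤ 1 / √(t ^ 2 - 1) := by
    rw [abs_div, abs_of_pos hb, div_le_div_iff₀ hb hc, one_mul]
    calc |sinh v| * √(t ^ 2 - 1) ≤ √(t ^ 2 - 1) * cosh v := by
          rw [mul_comm]; gcongr; rw [abs_sinh, ← cosh_abs v]; exact (sinh_lt_cosh _).le
      _ ≤ base t v := sqrt_mul_cosh_le_base (by linarith) v
  calc |flux s t v| = s / √(t ^ 2 - 1) * |sinh v / base t v| * integrand s t v := by
        rw [flux, abs_mul, abs_mul, abs_neg, abs_of_nonneg (by positivity), abs_of_pos hP]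
    _ ≤ s / √(t ^ 2 - 1) * (1 / √(t ^ 2 - 1)) * integrand s t v := by gcongr
    _ = s / (t ^ 2 - 1) * integrand s t v := by
        rw [div_mul_div_comm, mul_one, ← sq, sq_sqrt_sq_sub_one ht]

lemma tendsto_flux_atTop (hs : 0 < s) (ht : 1 < t) : Tendsto (flux s t) atTop (𝓝 0) := by
  refine squeeze_zero_norm (abs_flux_le hs.le ht) ?_
  simpa using (tendsto_integrand_atTop hs ht).const_mul (s / (t ^ 2 - 1))

end LegendreQ

section legendreQ

open LegendreQ

noncomputable def legendreQDeriv (s t : ℝ) : ℝ := ∫ v in Ioi 0, integrandDeriv s t v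

noncomputable def legendreQDeriv2 (s t : ℝ) : ℝ := ∫ v in Ioi 0, integrandDeriv2 s t v

variable {s t : ℝ}

theorem hasDerivAt_legendreQ (hs : 0 < s) (ht : 1 < t) :
    HasDerivAt (legendreQ s) (legendreQDeriv s t) t :=
  hasDerivAt_integral_of_abs_le hs ht (fun _ ht' ↦ continuous_integrand ht')
    (integrableOn_integrand hs ht) (fun _ ht' ↦ hasDerivAt_integrand ht')
    (continuous_integrandDeriv ht) (continuousOn_const.mul continuousOn_div_sq_sub_one)
    (fun _ ht' ↦ abs_integrandDeriv_le hs.le ht')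

theorem hasDerivAt_legendreQDeriv (hs : 0 < s) (ht : 1 < t) :
    HasDerivAt (legendreQDeriv s) (legendreQDeriv2 s t) t :=
  hasDerivAt_integral_of_abs_le hs ht (fun _ ht' ↦ continuous_integrandDeriv ht')
    (integrableOn_integrandDeriv hs ht) (fun _ ht' ↦ hasDerivAt_integrandDeriv ht')
    (continuous_integrandDeriv2 ht)
    (continuousOn_const.mul ((continuousOn_const.mul (continuousOn_div_sq_sub_one.pow 2)).add
      continuousOn_one_div_sq_sub_one_sq))
    (fun _ ht' ↦ abs_integrandDeriv2_le hs.le ht')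

theorem legendreQ_ode (hs : 0 < s) (ht : 1 < t) :
    (t ^ 2 - 1) * legendreQDeriv2 s t + 2 * t * legendreQDeriv s t
      = s * (s - 1) * legendreQ s t := by
  have hP := integrableOn_integrand hs ht
  have hP' := integrableOn_integrandDeriv hs ht
  have hP'' := integrableOn_integrandDeriv2 hs ht
  have hsum : IntegrableOn (fun v ↦ (t ^ 2 - 1) * integrandDeriv2 s t v
      + 2 * t * integrandDeriv s t v) (Ioi 0) := (hP''.const_mul _).add (hP'.const_mul _)
  have h := integral_Ioi_of_hasDerivAt_of_tendsto' (fun v _ ↦ hasDerivAt_flux ht v)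
    (hsum.sub (hP.const_mul _)) (tendsto_flux_atTop hs ht)
  rw [integral_sub hsum (hP.const_mul _), integral_add (hP''.const_mul _) (hP'.const_mul _),
    integral_const_mul, integral_const_mul, integral_const_mul] at h
  simp only [flux, sinh_zero, zero_div, mul_zero, zero_mul, sub_zero] at h
  exact sub_eq_zero.1 h

end legendreQ

lemma deriv_deriv_comp_eq {f f' f'' g g' : ℝ → ℝ} {g'' x : ℝ}
    (hf : ∀ᶠ u in 𝓝 x, HasDerivAt f (f' (g u)) (g u)) (hf' : HasDerivAt f' (f'' (g x)) (g x))
    (hg : ∀ᶠ u in 𝓝 x, HasDerivAt g (g' u) u) (hg' : HasDerivAt g' g'' x) :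
    deriv (deriv fun u ↦ f (g u)) x = f'' (g x) * g' x ^ 2 + f' (g x) * g'' := by
  have hderiv : deriv (fun u ↦ f (g u)) =ᶠ[𝓝 x] fun u ↦ f' (g u) * g' u := by
    filter_upwards [hf, hg] with u hfu hgu using (hfu.comp u hgu).deriv
  have h₂ : HasDerivAt (fun u ↦ f' (g u) * g' u) (f'' (g x) * g' x * g' x + f' (g x) * g'') x :=
    (hf'.comp x hg.self_of_nhds).mul hg'
  rw [hderiv.deriv_eq, h₂.deriv]
  ring

noncomputable def coshDist (w : ℂ) (x y : ℝ) : ℝ :=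
  1 + ((x - w.re) ^ 2 + (y - w.im) ^ 2) / (2 * y * w.im)

section coshDist

variable {w : ℂ} {x y : ℝ}

lemma one_lt_coshDist (hw : 0 < w.im) (hy : 0 < y) (hne : (x, y) ≠ (w.re, w.im)) :
    1 < coshDist w x y := by
  have hpos : 0 < (x - w.re) ^ 2 + (y - w.im) ^ 2 := by
    by_contra! h
    apply hne
    ext <;> simp only <;> nlinarith [sq_nonneg (x - w.re), sq_nonneg (y - w.im)]
  unfold coshDist
  have := div_pos hpos (by positivity : 0 < 2 * y * w.im)
  linarith

lemma hasDerivAt_coshDist_left (w : ℂ) (x y : ℝ) :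
    HasDerivAt (coshDist w · y) ((x - w.re) / (y * w.im)) x := by
  refine (((((hasDerivAt_id x).sub_const w.re).pow 2).add_const _).div_const _).const_add 1
    |>.congr_deriv ?_
  simp only [id]
  ring

lemma hasDerivAt_coshDist_right (hw : w.im ≠ 0) (hy : y ≠ 0) :
    HasDerivAt (coshDist w x ·) ((y ^ 2 - w.im ^ 2 - (x - w.re) ^ 2) / (2 * y ^ 2 * w.im)) y := by
  refine ((((((hasDerivAt_id y).sub_const w.im).pow 2).const_add _).div
    (((hasDerivAt_id y).const_mul 2).mul_const w.im) (by positivity)).const_add 1).congr_deriv ?_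
  simp only [id, Pi.pow_apply]
  field_simp
  ring

lemma hasDerivAt_coshDist_right_deriv (hw : w.im ≠ 0) (hy : y ≠ 0) :
    HasDerivAt (fun y ↦ (y ^ 2 - w.im ^ 2 - (x - w.re) ^ 2) / (2 * y ^ 2 * w.im))
      ((w.im ^ 2 + (x - w.re) ^ 2) / (y ^ 3 * w.im)) y := by
  refine ((((hasDerivAt_pow 2 y).sub_const _).sub_const _).div
    ((hasDerivAt_pow 2 y).const_mul 2 |>.mul_const w.im) (by positivity)).congr_deriv ?_
  field_simp
  ring

lemma sq_mul_gradient_sq_coshDist (hw : w.im ≠ 0) (hy : y ≠ 0) :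
    y ^ 2 * (((x - w.re) / (y * w.im)) ^ 2
        + ((y ^ 2 - w.im ^ 2 - (x - w.re) ^ 2) / (2 * y ^ 2 * w.im)) ^ 2)
      = coshDist w x y ^ 2 - 1 := by
  unfold coshDist
  field_simp
  ring

lemma sq_mul_laplacian_coshDist (hw : w.im ≠ 0) (hy : y ≠ 0) :
    y ^ 2 * (1 / (y * w.im) + (w.im ^ 2 + (x - w.re) ^ 2) / (y ^ 3 * w.im))
      = 2 * coshDist w x y := by
  unfold coshDist
  field_simp
  ring

theorem laplacian_comp_coshDist {f f' f'' : ℝ → ℝ} (hf : ∀ t > 1, HasDerivAt f (f' t) t)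
    (hf' : ∀ t > 1, HasDerivAt f' (f'' t) t) (hw : 0 < w.im) (hy : 0 < y)
    (hne : (x, y) ≠ (w.re, w.im)) :
    y ^ 2 * (deriv (deriv fun x' ↦ f (coshDist w x' y)) x
        + deriv (deriv fun y' ↦ f (coshDist w x y')) y)
      = (coshDist w x y ^ 2 - 1) * f'' (coshDist w x y)
        + 2 * coshDist w x y * f' (coshDist w x y) := by
  have hT := one_lt_coshDist hw hy hne
  have hf_near {g : ℝ → ℝ} {g' u₀ : ℝ} (hg : HasDerivAt g g' u₀) (hg₀ : 1 < g u₀) :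
      ∀ᶠ u in 𝓝 u₀, HasDerivAt f (f' (g u)) (g u) :=
    (continuousAt_const.eventually_lt hg.continuousAt hg₀).mono fun u hu ↦ hf _ hu
  have hxx := deriv_deriv_comp_eq (hf_near (hasDerivAt_coshDist_left w x y) hT) (hf' _ hT)
    (.of_forall fun u ↦ hasDerivAt_coshDist_left w u y)
    (((hasDerivAt_id x).sub_const w.re).div_const (y * w.im))
  have hyy := deriv_deriv_comp_eq (hf_near (hasDerivAt_coshDist_right hw.ne' hy.ne') hT) (hf' _ hT)
    ((eventually_gt_nhds hy).mono fun u hu ↦ hasDerivAt_coshDist_right hw.ne' hu.ne')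
    (hasDerivAt_coshDist_right_deriv hw.ne' hy.ne')
  rw [hxx, hyy, ← sq_mul_gradient_sq_coshDist hw.ne' hy.ne',
    ← sq_mul_laplacian_coshDist hw.ne' hy.ne']
  ring

end coshDist

/-- Let `s > 1` be real and fix a point `w` in the complex upper
half-plane.  Define `u(x, y) := Q_{s−1}(1 + ((x − Re w)² + (y − Im w)²)/(2·y·Im w))` for
`(x, y) ∈ ℝ × (0, ∞)` with `(x, y) ≠ (Re w, Im w)`.  Then `u` satisfies
`y²·(∂²u/∂x² + ∂²u/∂y²) = s·(s−1)·u(x, y)` on this domain; equivalently,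
`g_s(z, w) = −2·Q_{s−1}(1 + |z − w|²/(2·Im z·Im w))` is an eigenfunction of the hyperbolic
Laplacian `Δ = −y²(∂²/∂x² + ∂²/∂y²)` on `ℍ ∖ {w}` with eigenvalue `s(1 − s)`. -/
theorem greenKernel_laplace_eigenfunction (s : ℝ) (hs : 1 < s) (w : ℂ) (hw : 0 < w.im)
    (x y : ℝ) (hy : 0 < y) (hne : (x, y) ≠ (w.re, w.im)) :
    y ^ 2 * (deriv (deriv (fun x' : ℝ => greenKernel s w x' y)) x
        + deriv (deriv (fun y' : ℝ => greenKernel s w x y')) y)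
      = s * (s - 1) * greenKernel s w x y := by
  have hs₀ : 0 < s := by linarith
  have h := laplacian_comp_coshDist (fun t ht ↦ hasDerivAt_legendreQ hs₀ ht)
    (fun t ht ↦ hasDerivAt_legendreQDeriv hs₀ ht) hw hy hne
  rwa [legendreQ_ode hs₀ (one_lt_coshDist hw hy hne)] at h
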